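/- arXiv:2209.08377 — 3 statements merged into one kernel-verified Lean document; each statement's English description precedes it below -/
import Mathlib

section
/- Let B_λ be the semigroup of λ×λ-matrix units. Every injective endomorphism f of B_λ satisfies f(0) = 0 and there exists an injective map i : λ → λ with f(a,b) = (i a, i b) for all a, b ∈ λ. -/
/-- The semigroup of `λ×λ`-matrix units: the set `(λ×λ) ∪ {0}`, with `0 = none`. -/
abbrev MU (α : Type*) := Option (α × α)

/-- Multiplication of matrix units: `(a,b)·(c,d) = (a,d)` if `b = c`, and `0` otherwise;
`0` is absorbing on both sides. -/
def mumul {α : Type*} [DecidableEq α] : MU α → MU α → MU α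
  | some x, some y => if x.2 = y.1 then some (x.1, y.2) else none
  | _, _ => none

/-- Every injective endomorphism `f` of `B_λ` satisfies `f 0 = 0`, and there is an injective
map `i : λ → λ` with `f (a,b) = (i a, i b)` for all `a b`. -/
theorem matrixUnits_injective_endomorphism_form {α : Type*} [DecidableEq α]
    (f : MU α → MU α) (hf : ∀ x y : MU α, f (mumul x y) = mumul (f x) (f y))
    (hinj : Function.Injective f) :
    f none = none ∧
      ∃ i : α → α, Function.Injective i ∧ ∀ a b : α, f (some (a, b)) = some (i a, i b) := by
  have h0 : f none = none := by
    by_contra h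
    obtain ⟨p, hp⟩ := Option.ne_none_iff_exists'.mp h
    have hid : f none = mumul (f none) (f none) := by
      conv_lhs => rw [show (none : MU α) = mumul none none from rfl, hf]
    rw [hp] at hid
    have hpe : p.2 = p.1 := by
      by_contra hne
      simp [mumul, hne] at hid
    have h1 : f none = mumul (f none) (f (some p)) := by
      conv_lhs => rw [show (none : MU α) = mumul none (some p) from rfl, hf]
    rw [hp] at h1
    cases hq : f (some p) with
    | none => rw [hq] at h1; simp [mumul] at h1
    | some q =>
      obtain ⟨x, y⟩ := q
      rw [hq] at h1
      by_cases hc : p.2 = x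
      · simp only [mumul, hc, if_pos rfl] at h1
        have hpy : p = (p.1, y) := Option.some_inj.mp h1
        have hqp : (x, y) = p := by
          rw [← hc, hpe, hpy]
        have heq : f (some p) = f none := by rw [hq, hqp, hp]
        exact Option.some_ne_none p (hinj heq)
      · simp [mumul, hc] at h1
  have hne0 : ∀ x : α × α, f (some x) ≠ none := by
    intro x hx
    rw [← h0] at hx
    exact Option.some_ne_none x (hinj hx)
  have hI : ∀ a : α, ∃ c : α, f (some (a, a)) = some (c, c) := by
    intro a
    have hid : f (some (a, a)) = mumul (f (some (a, a))) (f (some (a, a))) := by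
      conv_lhs => rw [show (some (a, a) : MU α) = mumul (some (a, a)) (some (a, a)) by
        simp [mumul], hf]
    cases hq : f (some (a, a)) with
    | none => exact absurd hq (hne0 _)
    | some q =>
      obtain ⟨x, y⟩ := q
      rw [hq] at hid
      by_cases hc : y = x
      · exact ⟨x, by rw [hc]⟩
      · simp [mumul, hc] at hid
  choose i hi using hI
  refine ⟨h0, i, ?_, ?_⟩
  · intro a b hab
    have ha := hi a
    rw [hab, ← hi b] at ha
    exact (Prod.mk.injEq _ _ _ _ ▸ Option.some_inj.mp (hinj ha)).1
  · intro a b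
    have h1 : f (some (a, b)) = mumul (f (some (a, a))) (f (some (a, b))) := by
      conv_lhs => rw [show (some (a, b) : MU α) = mumul (some (a, a)) (some (a, b)) by
        simp [mumul], hf]
    have h2 : f (some (a, b)) = mumul (f (some (a, b))) (f (some (b, b))) := by
      conv_lhs => rw [show (some (a, b) : MU α) = mumul (some (a, b)) (some (b, b)) by
        simp [mumul], hf]
    cases hq : f (some (a, b)) with
    | none => exact absurd hq (hne0 _)
    | some q =>
      obtain ⟨x, y⟩ := q
      rw [hq, hi a] at h1
      rw [hq, hi b] at h2
      have hx : x = i a := by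
        by_cases hc : i a = x
        · exact hc.symm
        · simp [mumul, hc] at h1
      have hy : y = i b := by
        by_cases hc : y = i b
        · exact hc
        · simp [mumul, hc] at h2
      rw [hx, hy]
end

section
/- The monoid of injective endomorphisms of the semigroup B_λ of λ×λ-matrix units (under composition) is isomorphic to the monoid of injective self-maps of λ under composition. -/
/-- The monoid of injective endomorphisms of `B_λ` under composition. -/
def InjEndMU (α : Type*) [DecidableEq α] :=
  {f : MU α → MU α //
    Function.Injective f ∧ ∀ x y : MU α, f (mumul x y) = mumul (f x) (f y)}

instance (α : Type*) [DecidableEq α] : Monoid (InjEndMU α) where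
  mul f g := ⟨f.1 ∘ g.1, f.2.1.comp g.2.1, fun x y => by
    simp only [Function.comp_apply, g.2.2, f.2.2]⟩
  one := ⟨id, fun a b h => h, fun x y => rfl⟩
  mul_assoc f g h := rfl
  one_mul f := rfl
  mul_one f := rfl

/-- The monoid of injective self-maps of `λ` under composition. -/
def InjMap (α : Type*) := {f : α → α // Function.Injective f}

instance (α : Type*) : Monoid (InjMap α) where
  mul f g := ⟨f.1 ∘ g.1, f.2.comp g.2⟩
  one := ⟨id, fun a b h => h⟩
  mul_assoc f g h := rfl
  one_mul f := rfl
  mul_one f := rfl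

/-
An injective endomorphism `f` of `B_λ` fixes `0`: `f 0` is idempotent, and if it were `(d,d)`
then `f (d,d) · (d,d) = f ((d,d) · 0) = (d,d)` would force `f (d,d) = (d,d) = f 0`. Hence `f`
maps each nonzero idempotent `(a,a)` to a nonzero idempotent `(i a, i a)`, and from
`(a,b) = (a,a)·(a,b)·(b,b)` one reads off `f (a,b) = (i a, i b)` with `i` injective. Conversely
every injective `i` induces such an endomorphism, and `i ↦ f` is a monoid homomorphism.
-/

section MatrixUnits

variable {α : Type*} [DecidableEq α]

theorem mumul_self_eq_self {x : MU α} (h : mumul x x = x) : x = none ∨ ∃ a, x = some (a, a) := by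
  rcases x with _ | ⟨a, b⟩
  · exact Or.inl rfl
  · by_cases hab : b = a
    · exact Or.inr ⟨a, by rw [hab]⟩
    · simp [mumul, hab] at h

theorem eq_of_mumul_diag_eq_diag {y : MU α} {d : α} (h : mumul y (some (d, d)) = some (d, d)) :
    y = some (d, d) := by
  rcases y with _ | ⟨p, q⟩
  · simp [mumul] at h
  · by_cases hq : q = d
    · simp_all [mumul]
    · simp [mumul, hq] at h

theorem mumul_mumul_diag_eq_of_ne_none {c d : α} {y : MU α}
    (h : mumul (mumul (some (c, c)) y) (some (d, d)) ≠ none) :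
    mumul (mumul (some (c, c)) y) (some (d, d)) = some (c, d) := by
  rcases y with _ | ⟨p, q⟩
  · simp [mumul] at h
  · by_cases hp : c = p <;> by_cases hq : q = d <;> simp_all [mumul]

namespace InjEndMU

theorem apply_none (f : InjEndMU α) : f.1 none = none := by
  rcases mumul_self_eq_self (f.2.2 none none).symm with h0 | ⟨d, hd⟩
  · exact h0
  · have habsorb : mumul (f.1 (some (d, d))) (f.1 none) = f.1 none := (f.2.2 _ _).symm
    rw [hd] at habsorb
    have hfd : f.1 (some (d, d)) = f.1 none := (eq_of_mumul_diag_eq_diag habsorb).trans hd.symm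
    exact absurd (f.2.1 hfd) (Option.some_ne_none _)

theorem apply_ne_none (f : InjEndMU α) {x : MU α} (hx : x ≠ none) : f.1 x ≠ none := fun h =>
  hx (f.2.1 (h.trans f.apply_none.symm))

theorem exists_apply_diag (f : InjEndMU α) (a : α) : ∃ b, f.1 (some (a, a)) = some (b, b) := by
  have hidem : mumul (f.1 (some (a, a))) (f.1 (some (a, a))) = f.1 (some (a, a)) := by
    rw [← f.2.2]; simp [mumul]
  exact (mumul_self_eq_self hidem).resolve_left (f.apply_ne_none (Option.some_ne_none _))

theorem exists_injective_eq_map (f : InjEndMU α) :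
    ∃ i : α → α, Function.Injective i ∧ f.1 = Option.map (Prod.map i i) := by
  choose i hi using f.exists_apply_diag
  have hsome : ∀ a b, f.1 (some (a, b)) = some (i a, i b) := fun a b => by
    have hsplit : f.1 (some (a, b)) =
        mumul (mumul (some (i a, i a)) (f.1 (some (a, b)))) (some (i b, i b)) := by
      rw [← hi, ← hi, ← f.2.2, ← f.2.2]; simp [mumul]
    rw [hsplit]
    exact mumul_mumul_diag_eq_of_ne_none (hsplit ▸ f.apply_ne_none (Option.some_ne_none _))
  refine ⟨i, fun a b hab => ?_, funext fun x => ?_⟩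
  · have hdiag : some (a, a) = some (b, b) := f.2.1 ((hi a).trans (hab ▸ (hi b).symm))
    simpa using hdiag
  · rcases x with _ | ⟨a, b⟩
    · exact f.apply_none
    · exact hsome a b

end InjEndMU

variable (α) in
def inducedEnd : InjMap α →* InjEndMU α where
  toFun i := ⟨Option.map (Prod.map i.1 i.1), Option.map_injective (i.2.prodMap i.2), by
    rintro (_ | ⟨a, b⟩) (_ | ⟨c, d⟩) <;> simp only [mumul, Option.map_none, Option.map_some,
      Prod.map_fst, Prod.map_snd, i.2.eq_iff]
    split_ifs <;> rfl⟩
  map_one' := Subtype.ext (funext fun x => by rcases x with _ | ⟨a, b⟩ <;> rfl)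
  map_mul' i j := Subtype.ext (funext fun x => by rcases x with _ | ⟨a, b⟩ <;> rfl)

theorem inducedEnd_injective : Function.Injective (inducedEnd α) := fun i j h => by
  refine Subtype.ext (funext fun a => ?_)
  have h' : some (i.1 a, i.1 a) = some (j.1 a, j.1 a) :=
    congrFun (congrArg Subtype.val h) (some (a, a))
  simpa using h'

theorem inducedEnd_surjective : Function.Surjective (inducedEnd α) := fun f => by
  obtain ⟨i, hi, hfi⟩ := f.exists_injective_eq_map
  exact ⟨⟨i, hi⟩, Subtype.ext hfi.symm⟩

end MatrixUnits

/-- The monoid of injective endomorphisms of the semigroup `B_λ` of `λ×λ`-matrix units is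
isomorphic to the monoid of injective self-maps of `λ` under composition. -/
theorem matrixUnits_injEnd_iso_injMaps (α : Type*) [DecidableEq α] :
    Nonempty (InjEndMU α ≃* InjMap α) :=
  ⟨(MulEquiv.ofBijective (inducedEnd α) ⟨inducedEnd_injective, inducedEnd_surjective⟩).symm⟩
end

section
/- The automorphism group of the semigroup B_λ of λ×λ-matrix units is isomorphic to the symmetric group on λ. -/
/-- The automorphism group of the semigroup `B_λ`: bijective self-maps preserving the
multiplication. -/
def AutMU (α : Type*) [DecidableEq α] :=
  {e : Equiv.Perm (MU α) // ∀ x y : MU α, e (mumul x y) = mumul (e x) (e y)}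

instance (α : Type*) [DecidableEq α] : Group (AutMU α) where
  mul e f := ⟨e.1 * f.1, fun x y => by
    simp only [Equiv.Perm.mul_apply, f.2, e.2]⟩
  one := ⟨1, fun x y => rfl⟩
  inv e := ⟨e.1⁻¹, fun x y => (Equiv.injective e.1) (by
    rw [Equiv.Perm.coe_inv, Equiv.apply_symm_apply, e.2, Equiv.apply_symm_apply,
      Equiv.apply_symm_apply])⟩
  mul_assoc e f g := Subtype.ext (mul_assoc _ _ _)
  one_mul e := Subtype.ext (one_mul _)
  mul_one e := Subtype.ext (mul_one _)
  inv_mul_cancel e := Subtype.ext (inv_mul_cancel _)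


/-!
An automorphism fixes `0` and sends nonzero elements to nonzero ones. Since it preserves
idempotents, it sends `(a,a)` to some `(σ a, σ a)`; writing `(a,b) = (a,a)(a,b) = (a,b)(b,b)`
forces `(a,b) ↦ (σ a, σ b)`. Hence every automorphism is induced by a permutation `σ` of `λ`,
and `σ` depends multiplicatively on the automorphism.
-/

section mumul
variable {α : Type*} [DecidableEq α]

@[simp]
lemma mumul_none_left (x : MU α) : mumul none x = none := by cases x <;> rfl

@[simp]
lemma mumul_none_right (x : MU α) : mumul x none = none := by cases x <;> rfl

@[simp]
lemma mumul_some_some (a b c d : α) :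
    mumul (some (a, b)) (some (c, d)) = if b = c then some (a, d) else none := rfl

end mumul

namespace AutMU
variable {α : Type*} [DecidableEq α]

lemma map_mumul (e : AutMU α) (x y : MU α) : e.1 (mumul x y) = mumul (e.1 x) (e.1 y) := e.2 x y

lemma mul_apply (e f : AutMU α) (x : MU α) : (e * f).1 x = e.1 (f.1 x) := rfl

lemma one_apply (x : MU α) : (1 : AutMU α).1 x = x := rfl

lemma map_none (e : AutMU α) : e.1 none = none := by
  simpa using e.map_mumul none (e.1.symm none)

lemma exists_map_some (e : AutMU α) (z : α × α) : ∃ w, e.1 (some z) = some w := by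
  refine Option.ne_none_iff_exists'.mp fun h => ?_
  exact Option.some_ne_none z (e.1.injective (h.trans e.map_none.symm))

lemma exists_map_diag (e : AutMU α) (a : α) : ∃ c, e.1 (some (a, a)) = some (c, c) := by
  obtain ⟨⟨c, d⟩, h⟩ := e.exists_map_some (a, a)
  have idem := e.map_mumul (some (a, a)) (some (a, a))
  simp only [mumul_some_some, if_true, h] at idem
  split_ifs at idem with hdc
  exact ⟨c, by rw [h, hdc]⟩

noncomputable def permFun (e : AutMU α) (a : α) : α := (e.exists_map_diag a).choose

lemma map_diag (e : AutMU α) (a : α) : e.1 (some (a, a)) = some (e.permFun a, e.permFun a) :=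
  (e.exists_map_diag a).choose_spec

lemma permFun_eq_of_map_diag {e : AutMU α} {a c : α} (h : e.1 (some (a, a)) = some (c, c)) :
    e.permFun a = c := by
  simpa [map_diag] using h

lemma map_some (e : AutMU α) (a b : α) :
    e.1 (some (a, b)) = some (e.permFun a, e.permFun b) := by
  obtain ⟨⟨c, d⟩, h⟩ := e.exists_map_some (a, b)
  have left := e.map_mumul (some (a, a)) (some (a, b))
  have right := e.map_mumul (some (a, b)) (some (b, b))
  simp only [mumul_some_some, if_true, map_diag, h] at left right
  split_ifs at left right with hc hd
  rw [h, hc, hd]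

lemma permFun_mul (e f : AutMU α) (a : α) : (e * f).permFun a = e.permFun (f.permFun a) :=
  permFun_eq_of_map_diag (by rw [mul_apply, map_diag, map_diag])

lemma permFun_one (a : α) : (1 : AutMU α).permFun a = a := permFun_eq_of_map_diag (one_apply _)

noncomputable def toPerm (e : AutMU α) : Equiv.Perm α where
  toFun := e.permFun
  invFun := e⁻¹.permFun
  left_inv a := by rw [← permFun_mul, inv_mul_cancel, permFun_one]
  right_inv a := by rw [← permFun_mul, mul_inv_cancel, permFun_one]

def ofPerm (σ : Equiv.Perm α) : AutMU α :=
  ⟨Equiv.optionCongr (σ.prodCongr σ), by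
    rintro (_ | ⟨a, b⟩) (_ | ⟨c, d⟩)
    · rfl
    · rfl
    · rfl
    · by_cases h : b = c <;> simp [h, σ.injective.ne]⟩

lemma ofPerm_some (σ : Equiv.Perm α) (a b : α) : (ofPerm σ).1 (some (a, b)) = some (σ a, σ b) :=
  rfl

noncomputable def mulEquivPerm : AutMU α ≃* Equiv.Perm α where
  toFun := toPerm
  invFun := ofPerm
  left_inv e := by
    refine Subtype.ext (Equiv.ext ?_)
    rintro (_ | ⟨a, b⟩)
    · exact e.map_none.symm
    · exact (e.map_some a b).symm
  right_inv σ := Equiv.ext fun a => permFun_eq_of_map_diag (ofPerm_some σ a a)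
  map_mul' e f := Equiv.ext (permFun_mul e f)

end AutMU

/-- The automorphism group of the semigroup `B_λ` of `λ×λ`-matrix units is isomorphic to the
symmetric group on `λ`. -/
theorem matrixUnits_aut_iso_perm (α : Type*) [DecidableEq α] :
    Nonempty (AutMU α ≃* Equiv.Perm α) :=
  ⟨AutMU.mulEquivPerm⟩
end
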